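/- For every integer k with 1 ≤ k ≤ n, there exists a set C ⊆ {0,1}^n with |C| ≥ 2^n / (2n^{2k} + 1) such that no two distinct elements of C are k-confusable. -/
import Mathlib

/-- `Subseq k x` is the set of all subsequences of `x` obtained by deleting exactly `k` symbols,
i.e. all subsequences of `x` of length `|x| - k`. -/
def Subseq {α : Type*} (k : ℕ) (x : List α) : Set (List α) :=
  {y | y.Sublist x ∧ y.length + k = x.length}

/-- Two strings are `k`-confusable if they have a common output on the `k`-deletion channel. -/
def Confusable {α : Type*} (k : ℕ) (x y : List α) : Prop :=
  (Subseq k x ∩ Subseq k y).Nonempty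

/-- The set of all binary strings of length `m`. -/
def bcube : ℕ → Finset (List Bool)
  | 0 => {[]}
  | (m+1) => ((bcube m).image (List.cons true)) ∪ ((bcube m).image (List.cons false))

lemma mem_bcube : ∀ (m : ℕ) (y : List Bool), y ∈ bcube m ↔ y.length = m := by
  intro m
  induction m with
  | zero => intro y; simp [bcube, List.length_eq_zero_iff]
  | succ m ih =>
    intro y
    cases y with
    | nil => simp [bcube]
    | cons b t => cases b <;> simp [bcube, ih]

lemma card_bcube : ∀ m, (bcube m).card = 2 ^ m := by
  intro m
  induction m with
  | zero => simp [bcube]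
  | succ m ih =>
    have hd : Disjoint ((bcube m).image (List.cons true)) ((bcube m).image (List.cons false)) := by
      rw [Finset.disjoint_left]
      rintro a ha hb
      simp only [Finset.mem_image] at ha hb
      obtain ⟨x, -, rfl⟩ := ha
      obtain ⟨y, -, h⟩ := hb
      simp at h
    have h1 : ∀ b : Bool, ((bcube m).image (List.cons b)).card = 2 ^ m := by
      intro b
      rw [Finset.card_image_of_injective _ (fun a b h => by simpa using h), ih]
    rw [bcube, Finset.card_union_of_disjoint hd, h1, h1]
    ring

/-- Partial sums of binomial coefficients. -/
def pbin (m j : ℕ) : ℕ := ∑ i ∈ Finset.range (j+1), m.choose i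

lemma pbin_zero (m : ℕ) : pbin m 0 = 1 := by simp [pbin]

lemma pbin_pascal (m j : ℕ) : pbin (m+1) (j+1) = pbin m (j+1) + pbin m j := by
  unfold pbin
  rw [Finset.sum_range_succ' (fun i => (m+1).choose i)]
  simp only [Nat.choose_succ_succ]
  rw [Finset.sum_add_distrib]
  rw [Finset.sum_range_succ' (fun i => m.choose i) (j+1),
    Finset.sum_range_succ' (fun i => m.choose i) j]
  simp [Nat.choose_zero_right]
  ring

/-- The number of supersequences of length `m` of a fixed string `z` is at most
`∑_{i ≤ m - |z|} C(m, i)`. -/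
lemma sup_card : ∀ (m : ℕ) (z : List Bool),
    ((bcube m).filter (fun y => z.Sublist y)).card ≤ pbin m (m - z.length) := by
  intro m
  induction m with
  | zero =>
    intro z
    have : ((bcube 0).filter (fun y => z.Sublist y)).card ≤ (bcube 0).card :=
      Finset.card_filter_le _ _
    simpa [bcube, pbin] using this
  | succ m ih =>
    intro z
    cases z with
    | nil =>
      have h1 : ((bcube (m+1)).filter (fun y => List.Sublist [] y)).card ≤ (bcube (m+1)).card :=
        Finset.card_filter_le _ _
      rw [card_bcube] at h1
      simpa [pbin, Nat.sum_range_choose] using h1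
    | cons a z' =>
      have hsplit : bcube (m+1)
          = ((bcube m).image (List.cons true)) ∪ ((bcube m).image (List.cons false)) := rfl
      rw [hsplit, Finset.filter_union]
      refine le_trans (Finset.card_union_le _ _) ?_
      have hinj : ∀ b : Bool, Function.Injective (List.cons b) :=
        fun b x y h => by simpa using h
      have hcard : ∀ b : Bool,
          (((bcube m).image (List.cons b)).filter (fun y => (a :: z').Sublist y)).card
          = ((bcube m).filter (fun y => (a :: z').Sublist (b :: y))).card := by
        intro b
        rw [Finset.filter_image, Finset.card_image_of_injective _ (hinj b)]
      rw [hcard true, hcard false]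
      have hmatch : ((bcube m).filter (fun y => (a :: z').Sublist (a :: y))).card
          ≤ pbin m (m - z'.length) := by
        have : ((bcube m).filter (fun y => (a :: z').Sublist (a :: y)))
            = ((bcube m).filter (fun y => z'.Sublist y)) := by
          apply Finset.filter_congr
          intro y _
          simp [List.cons_sublist_cons]
        rw [this]; exact ih z'
      have hnon : ∀ b : Bool, b ≠ a →
          ((bcube m).filter (fun y => (a :: z').Sublist (b :: y))).card
          ≤ pbin m (m - (z'.length + 1)) := by
        intro b hb
        refine le_trans (Finset.card_le_card ?_) (ih (a :: z'))
        intro y hy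
        simp only [Finset.mem_filter] at hy ⊢
        refine ⟨hy.1, ?_⟩
        rcases List.sublist_cons_iff.mp hy.2 with h | ⟨r, hr, -⟩
        · exact h
        · injection hr with h1 h2
          exact absurd h1.symm hb
      have hempty : m ≤ z'.length → ∀ b : Bool, b ≠ a →
          ((bcube m).filter (fun y => (a :: z').Sublist (b :: y))).card = 0 := by
        intro hm b hb
        rw [Finset.card_eq_zero]
        ext y
        simp only [Finset.mem_filter, Finset.notMem_empty, iff_false, not_and]
        intro hy hsub
        rcases List.sublist_cons_iff.mp hsub with h | ⟨r, hr, -⟩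
        · have hle := h.length_le
          rw [(mem_bcube m y).mp hy] at hle
          simp only [List.length_cons] at hle
          omega
        · injection hr with h1 h2
          exact hb h1.symm
      simp only [List.length_cons, Nat.succ_sub_succ]
      rcases Nat.lt_or_ge z'.length m with hL | hL
      · have ht : m - z'.length = (m - (z'.length + 1)) + 1 := by omega
        rw [ht, pbin_pascal, ← ht]
        cases a
        · have h1 := hnon true (by simp)
          have h2 := hmatch
          omega
        · have h1 := hmatch
          have h2 := hnon false (by simp)
          omega
      · have ht : m - z'.length = 0 := by omega
        rw [ht, pbin_zero]
        have h2 := hmatch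
        rw [ht, pbin_zero] at h2
        cases a
        · have h1 := hempty hL true (by simp)
          omega
        · have h1 := hempty hL false (by simp)
          omega

open scoped Classical in
/-- The number of strings of length `n` confusable with a fixed string `c` of length `n`
is at most `C(n,k) * pbin n k`. -/
lemma ball_card (n k : ℕ) (hkn : k ≤ n) (c : List Bool) (hc : c.length = n) :
    ((bcube n).filter (fun w => Confusable k c w)).card ≤ n.choose k * pbin n k := by
  have hsub : ((bcube n).filter (fun w => Confusable k c w))
      ⊆ ((c.sublistsLen (n-k)).toFinset).biUnion
        (fun z => (bcube n).filter (fun y => z.Sublist y)) := by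
    intro w hw
    simp only [Finset.mem_filter] at hw
    obtain ⟨hwcube, z, hz⟩ := hw
    obtain ⟨⟨hz1, hz2⟩, ⟨hz3, hz4⟩⟩ := hz
    rw [Finset.mem_biUnion]
    refine ⟨z, ?_, ?_⟩
    · rw [List.mem_toFinset, List.mem_sublistsLen]
      exact ⟨hz1, by omega⟩
    · rw [Finset.mem_filter]; exact ⟨hwcube, hz3⟩
  refine le_trans (Finset.card_le_card hsub) ?_
  refine le_trans Finset.card_biUnion_le ?_
  refine le_trans (Finset.sum_le_card_nsmul _ _ (pbin n k) ?_) ?_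
  · intro z hz
    rw [List.mem_toFinset, List.mem_sublistsLen] at hz
    have h := sup_card n z
    have hzl : n - z.length = k := by omega
    rwa [hzl] at h
  · rw [smul_eq_mul]
    have hb : ((c.sublistsLen (n-k)).toFinset).card ≤ n.choose k := by
      refine le_trans (List.toFinset_card_le _) ?_
      rw [List.length_sublistsLen, hc, Nat.choose_symm hkn]
    exact Nat.mul_le_mul_right _ hb

lemma mygeom_le (n : ℕ) (hn : 2 ≤ n) : ∀ j, ∑ i ∈ Finset.range (j+1), n ^ i ≤ 2 * n ^ j := by
  intro j
  induction j with
  | zero => simp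
  | succ j ih =>
    rw [Finset.sum_range_succ]
    have h1 : 2 * n ^ j ≤ n ^ (j+1) := by
      rw [pow_succ']
      exact Nat.mul_le_mul_right _ hn
    omega

lemma arith (n k : ℕ) (hk : 1 ≤ k) (hkn : k ≤ n) :
    n.choose k * pbin n k ≤ 2 * n ^ (2*k) := by
  have h1 : n.choose k ≤ n ^ k := Nat.choose_le_pow n k
  have h2 : pbin n k ≤ 2 * n ^ k := by
    rcases Nat.lt_or_ge n 2 with h | h
    · have hn : n = 1 := by omega
      have hkk : k = 1 := by omega
      subst hn; subst hkk
      decide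
    · refine le_trans (Finset.sum_le_sum (fun i _ => Nat.choose_le_pow n i)) (mygeom_le n h k)
  calc n.choose k * pbin n k ≤ n ^ k * (2 * n ^ k) := Nat.mul_le_mul h1 h2
    _ = 2 * n ^ (2*k) := by rw [two_mul k, pow_add]; ring

theorem stmt_6 (k n : ℕ) (hk : 1 ≤ k) (hkn : k ≤ n) :
    ∃ C : Finset (List Bool), (∀ c ∈ C, c.length = n) ∧
      (2 : ℝ) ^ n / (2 * (n : ℝ) ^ (2 * k) + 1) ≤ (C.card : ℝ) ∧
      ∀ c₁ ∈ C, ∀ c₂ ∈ C, c₁ ≠ c₂ → ¬ Confusable k c₁ c₂ := by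
  classical
  obtain ⟨C, hCmem, hCmax⟩ := Finset.exists_max_image
    ((bcube n).powerset.filter
      (fun s => ∀ c₁ ∈ s, ∀ c₂ ∈ s, c₁ ≠ c₂ → ¬ Confusable k c₁ c₂)) Finset.card
    ⟨∅, by simp⟩
  simp only [Finset.mem_filter, Finset.mem_powerset] at hCmem
  obtain ⟨hCsub, hCgood⟩ := hCmem
  refine ⟨C, fun c hc => (mem_bcube n c).mp (hCsub hc), ?_, hCgood⟩
  have hcover : bcube n ⊆ C.biUnion
      (fun c => (bcube n).filter (fun w => w = c ∨ Confusable k c w)) := by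
    intro w hw
    by_contra hwn
    simp only [Finset.mem_biUnion, Finset.mem_filter, not_exists, not_and, not_or] at hwn
    have hwC : w ∉ C := fun h => (hwn w h hw).1 rfl
    have hgood' : ∀ c₁ ∈ insert w C, ∀ c₂ ∈ insert w C, c₁ ≠ c₂ → ¬ Confusable k c₁ c₂ := by
      intro c₁ h₁ c₂ h₂ hne hconf
      rcases Finset.mem_insert.mp h₁ with h₁w | h₁C
      · rcases Finset.mem_insert.mp h₂ with h₂w | h₂C
        · exact hne (h₁w.trans h₂w.symm)
        · subst h₁w
          exact (hwn c₂ h₂C hw).2 (by rwa [Confusable, Set.inter_comm] at hconf)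
      · rcases Finset.mem_insert.mp h₂ with h₂w | h₂C
        · subst h₂w
          exact (hwn c₁ h₁C hw).2 hconf
        · exact hCgood c₁ h₁C c₂ h₂C hne hconf
    have hmem : insert w C ∈ (bcube n).powerset.filter
        (fun s => ∀ c₁ ∈ s, ∀ c₂ ∈ s, c₁ ≠ c₂ → ¬ Confusable k c₁ c₂) := by
      simp only [Finset.mem_filter, Finset.mem_powerset]
      exact ⟨Finset.insert_subset hw hCsub, hgood'⟩
    have h := hCmax _ hmem
    rw [Finset.card_insert_of_notMem hwC] at h
    omega
  have hcount : 2 ^ n ≤ C.card * (2 * n ^ (2*k) + 1) := by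
    have h1 := Finset.card_le_card hcover
    rw [card_bcube] at h1
    refine le_trans h1 ?_
    refine le_trans Finset.card_biUnion_le ?_
    refine le_trans (Finset.sum_le_card_nsmul _ _ (2 * n ^ (2*k) + 1) ?_)
      (by rw [smul_eq_mul])
    intro c hc
    have hclen : c.length = n := (mem_bcube n c).mp (hCsub hc)
    have hball := ball_card n k hkn c hclen
    have harith := arith n k hk hkn
    have hsub : (bcube n).filter (fun w => w = c ∨ Confusable k c w)
        ⊆ insert c ((bcube n).filter (fun w => Confusable k c w)) := by
      intro w hw
      simp only [Finset.mem_filter] at hw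
      rcases hw.2 with rfl | h
      · exact Finset.mem_insert_self _ _
      · exact Finset.mem_insert_of_mem (Finset.mem_filter.mpr ⟨hw.1, h⟩)
    refine le_trans (Finset.card_le_card hsub) ?_
    refine le_trans (Finset.card_insert_le _ _) ?_
    omega
  have hpos : (0:ℝ) < 2 * (n:ℝ) ^ (2*k) + 1 := by positivity
  rw [div_le_iff₀ hpos]
  calc (2:ℝ) ^ n = ((2 ^ n : ℕ) : ℝ) := by push_cast; ring
    _ ≤ ((C.card * (2 * n ^ (2*k) + 1) : ℕ) : ℝ) := by exact_mod_cast hcount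
    _ = C.card * (2 * (n:ℝ) ^ (2*k) + 1) := by push_cast; ring
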